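/- Let A be a unital complex Banach algebra, M a unital A-bimodule, n ≥ 3, and let Δ be a 2-local derivation from M_n(A) into M_n(M) that vanishes on the set D_n(A) of diagonal matrices and on the linear span of the matrix units {e_{ij}}_{i,j=1}^n. Then for every x ∈ M_n(A) and all k ≠ s, the (k,s)-entry of Δ(x) is zero: Δ(x)_{ks} = 0. -/

import Mathlib

open MulOpposite Matrix

variable (A M : Type*) [NormedRing A] [NormedAlgebra ℂ A] [CompleteSpace A]
  [AddCommGroup M] [Module ℂ M] [Module A M] [Module Aᵐᵒᵖ M]
  [SMulCommClass A Aᵐᵒᵖ M] [IsScalarTower ℂ A M] [IsScalarTower ℂ Aᵐᵒᵖ M]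

/-- `D : A → M` is a derivation from the Banach algebra `A` into the unital
`A`-bimodule `M`: a `ℂ`-linear map with the Leibniz rule (the right action of
`A` on `M` is written via `Aᵐᵒᵖ`). -/
def IsDerivation (D : A → M) : Prop :=
  IsLinearMap ℂ D ∧ ∀ x y : A, D (x * y) = op y • D x + x • D y

variable {n : ℕ}

/-- The left action of `Mₙ(A)` on `Mₙ(M)`: `(x · Y)_{ij} = Σ_k x_{ik} · Y_{kj}`. -/
def matL (x : Matrix (Fin n) (Fin n) A) (Y : Matrix (Fin n) (Fin n) M) :
    Matrix (Fin n) (Fin n) M :=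
  Matrix.of fun i j => ∑ k, x i k • Y k j

/-- The right action of `Mₙ(A)` on `Mₙ(M)`: `(Y · x)_{ij} = Σ_k Y_{ik} · x_{kj}`. -/
def matR (Y : Matrix (Fin n) (Fin n) M) (x : Matrix (Fin n) (Fin n) A) :
    Matrix (Fin n) (Fin n) M :=
  Matrix.of fun i j => ∑ k, op (x k j) • Y i k

/-- A derivation from `Mₙ(A)` into the `Mₙ(A)`-bimodule `Mₙ(M)`. -/
def IsMatDerivation (D : Matrix (Fin n) (Fin n) A → Matrix (Fin n) (Fin n) M) : Prop :=
  IsLinearMap ℂ D ∧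
    ∀ x y : Matrix (Fin n) (Fin n) A, D (x * y) = matR A M (D x) y + matL A M x (D y)

/-- A 2-local derivation from `Mₙ(A)` into `Mₙ(M)`: for each pair of points there
is a derivation agreeing with `Δ` at both of them. -/
def Is2LocalMatDerivation (Δ : Matrix (Fin n) (Fin n) A → Matrix (Fin n) (Fin n) M) : Prop :=
  ∀ x y : Matrix (Fin n) (Fin n) A,
    ∃ D : Matrix (Fin n) (Fin n) A → Matrix (Fin n) (Fin n) M,
      IsMatDerivation A M D ∧ Δ x = D x ∧ Δ y = D y

/-- The matrix unit `e_{ij}`: the unit of `A` at position `(i,j)`, zeros elsewhere. -/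
def matUnit (i j : Fin n) : Matrix (Fin n) (Fin n) A :=
  Matrix.single i j 1

/-- The linear span of the matrix units `{e_{ij}}`. -/
noncomputable def unitSpan (n : ℕ) : Submodule ℂ (Matrix (Fin n) (Fin n) A) :=
  Submodule.span ℂ (Set.range fun p : Fin n × Fin n => Matrix.single p.1 p.2 (1 : A))

/-- The set `Dₙ(A)` of diagonal matrices in `Mₙ(A)`. -/
def diagSet (n : ℕ) : Set (Matrix (Fin n) (Fin n) A) :=
  {x | ∀ i j : Fin n, i ≠ j → x i j = 0}

/-! Every derivation `D` satisfies `D (v e_ij)_{ab} = 0` unless `a = i` or `b = j`, because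
`v e_ij = e_ii (v e_ij)`; hence `(D m)_{ks}` only sees row `k` and column `s` of `m`. For the
derivation agreeing with `Δ` at `z` and `z'` this means that `Δ(z)_{ks} = Δ(z')_{ks}` when `z` and
`z'` differ away from row `k` and column `s`, and pairing `z` with the diagonal matrix
`e_aa + 2 e_bb` gives `Δ(z)_{ab} = 0` whenever `z_{ab} = 0`.

The off-diagonal entries of `x` other than `(k,s)` are then removed one at a time (induction on
the off-diagonal support): an entry `v` at `(k,j)` is replaced by `v` at `(j,j)`, which changes
`Δ(·)_{ks}` and `Δ(·)_{js}` by the same amount, and similarly in column `s`. The diagonal entries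
at `(k,k)` and `(s,s)` are removed in the same way, using a third index `t`, which leaves `v e_ks`.
Finally `g = v e_ks + e_st + e_tk` has a diagonal cube and differs from `v e_ks` by an element of
the span of matrix units; the Leibniz rule for `g³` and for `(e_st + e_tk)³ = 0` gives
`Δ(v e_ks)_{ks} = 0`. -/

namespace Matrix

variable {ι α : Type*}

lemma single_apply_eq_zero_of_ne [DecidableEq ι] [Zero α] {i j a b : ι} (h : (a, b) ≠ (i, j))
    (c : α) : single i j c a b = 0 :=
  if_neg fun h' : i = a ∧ j = b => h (by rw [h'.1, h'.2])

lemma single_self_apply_of_ne [DecidableEq ι] [Zero α] {i j : ι} (hij : i ≠ j) (c : ι) (d : α) :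
    single c c d i j = 0 :=
  if_neg fun h : c = i ∧ c = j => hij (h.1 ▸ h.2)

def offDiagSupport [Zero α] (z : Matrix ι ι α) : Set (ι × ι) :=
  {p | p.1 ≠ p.2 ∧ z p.1 p.2 ≠ 0}

lemma offDiagSupport_sub_ssubset [AddGroup α] {z m : Matrix ι ι α} {i j : ι}
    (hp : (i, j) ∈ z.offDiagSupport) (hm : m i j = z i j)
    (hm' : ∀ a b, a ≠ b → (a, b) ≠ (i, j) → m a b = 0) :
    (z - m).offDiagSupport ⊂ z.offDiagSupport := by
  have hsub : (z - m).offDiagSupport ⊆ z.offDiagSupport := by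
    rintro ⟨a, b⟩ ⟨hab, hzm⟩
    refine ⟨hab, fun hzab => hzm ?_⟩
    by_cases hp : (a, b) = (i, j)
    · simp_all
    · simp [hzab, hm' a b hab hp]
  refine (Set.ssubset_iff_of_subset hsub).2 ⟨(i, j), hp, fun h => h.2 ?_⟩
  simp [hm]

variable [Fintype ι] [DecidableEq ι] [Semiring α] {k s t : ι}

lemma cycle_sq (hks : k ≠ s) (hkt : k ≠ t) (hst : s ≠ t) (v : α) :
    (single k s v + (single s t 1 + single t k 1)) *
        (single k s v + (single s t 1 + single t k 1)) =
      single k t v + single s k 1 + single t s v := by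
  simp only [mul_add, add_mul, ne_eq, hks, hkt, hst, hks.symm, hkt.symm, hst.symm,
    not_false_eq_true, single_mul_single_of_ne, single_mul_single_same, one_mul, mul_one,
    zero_add, add_zero]
  abel

lemma cycle_cube (hks : k ≠ s) (hkt : k ≠ t) (hst : s ≠ t) (v : α) :
    (single k s v + (single s t 1 + single t k 1)) *
        ((single k s v + (single s t 1 + single t k 1)) *
          (single k s v + (single s t 1 + single t k 1))) =
      single k k v + single s s v + single t t v := by
  rw [cycle_sq hks hkt hst]
  simp only [mul_add, add_mul, ne_eq, hks, hkt, hst, hks.symm, hkt.symm, hst.symm,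
    not_false_eq_true, single_mul_single_of_ne, single_mul_single_same, one_mul, mul_one,
    zero_add, add_zero]
  abel

end Matrix

section Derivation

variable {A M : Type*} [NormedRing A] [NormedAlgebra ℂ A] [AddCommGroup M] [Module ℂ M]
  [Module A M] [Module Aᵐᵒᵖ M]
variable {D : Matrix (Fin n) (Fin n) A → Matrix (Fin n) (Fin n) M}

namespace IsMatDerivation

lemma map_add (hD : IsMatDerivation A M D) (x y : Matrix (Fin n) (Fin n) A) :
    D (x + y) = D x + D y :=
  hD.1.map_add x y

lemma map_smul (hD : IsMatDerivation A M D) (c : ℂ) (x : Matrix (Fin n) (Fin n) A) :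
    D (c • x) = c • D x :=
  hD.1.map_smul c x

lemma map_sub (hD : IsMatDerivation A M D) (x y : Matrix (Fin n) (Fin n) A) :
    D (x - y) = D x - D y :=
  (IsLinearMap.mk' D hD.1).map_sub x y

lemma map_zero (hD : IsMatDerivation A M D) : D 0 = 0 :=
  (IsLinearMap.mk' D hD.1).map_zero

lemma map_mul_apply (hD : IsMatDerivation A M D) (x y : Matrix (Fin n) (Fin n) A) (a b : Fin n) :
    D (x * y) a b = ∑ l, op (y l b) • D x a l + ∑ l, x a l • D y l b := by
  rw [hD.2]; rfl

lemma map_mul_eq_zero (hD : IsMatDerivation A M D) {x y : Matrix (Fin n) (Fin n) A}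
    (hx : D x = 0) (hy : D y = 0) : D (x * y) = 0 := by
  ext a b
  simp [hD.map_mul_apply, hx, hy]

lemma map_mul_apply_eq_zero (hD : IsMatDerivation A M D) {x y : Matrix (Fin n) (Fin n) A}
    {k s : Fin n} (hx : ∀ j, x k j = 0) (hy : ∀ i, y i s = 0) : D (x * y) k s = 0 := by
  simp [hD.map_mul_apply, hx, hy]

lemma apply_eq_zero_of_row_col (hD : IsMatDerivation A M D) {m : Matrix (Fin n) (Fin n) A}
    {k s : Fin n} (hrow : ∀ j, m k j = 0) (hcol : ∀ i, m i s = 0) : D m k s = 0 := by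
  have hm : (1 - single k k 1) * m = m := by
    ext i j
    by_cases hi : i = k <;> simp [sub_mul, hi, hrow]
  rw [← hm]
  exact hD.map_mul_apply_eq_zero (by simp [single_apply, one_apply]) hcol

lemma map_single_apply_of_ne (hD : IsMatDerivation A M D) {i j a b : Fin n} (ha : a ≠ i)
    (hb : b ≠ j) (v : A) : D (single i j v) a b = 0 :=
  hD.apply_eq_zero_of_row_col (by simp [ha.symm]) (by simp [hb.symm])

lemma map_single_apply_row (hD : IsMatDerivation A M D) {a j b : Fin n} (hb : b ≠ j) (v : A) :
    D (single a j v) a b = D (single j j v) j b := by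
  have h : single a j v = single a j 1 * single j j v := by simp
  rw [h, hD.map_mul_apply]
  simp [single_apply, hb.symm]

lemma map_single_apply_col (hD : IsMatDerivation A M D) {i b a : Fin n} (ha : a ≠ i) (v : A) :
    D (single i b v) a b = D (single i i v) a i := by
  have h : single i b v = single i i v * single i b 1 := by simp
  rw [h, hD.map_mul_apply]
  simp [single_apply, ha.symm, apply_ite op]

lemma map_single_add_diag_apply_row (hD : IsMatDerivation A M D) {k j s : Fin n}
    (hjk : j ≠ k) (hjs : j ≠ s) (v : A) :
    D (single k j v + single j j v) k s = D (single k j v + single j j v) j s := by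
  rw [hD.map_add, Matrix.add_apply, Matrix.add_apply, hD.map_single_apply_row hjs.symm,
    hD.map_single_apply_of_ne hjk.symm hjs.symm, hD.map_single_apply_of_ne hjk hjs.symm,
    add_zero, zero_add]

lemma map_single_add_diag_apply_col (hD : IsMatDerivation A M D) {k i s : Fin n}
    (hik : i ≠ k) (his : i ≠ s) (v : A) :
    D (single i s v + single i i v) k s = D (single i s v + single i i v) k i := by
  rw [hD.map_add, Matrix.add_apply, Matrix.add_apply, hD.map_single_apply_col hik.symm,
    hD.map_single_apply_of_ne hik.symm his.symm, hD.map_single_apply_of_ne hik.symm his,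
    add_zero, zero_add]

/-- `ker D` is a subalgebra, and `e_aa = 2y - y²`, `2 e_bb = y² - y` for `y = e_aa + 2 e_bb`. -/
lemma map_single_one_eq_zero (hD : IsMatDerivation A M D) {a b : Fin n} (hab : a ≠ b)
    (hy : D (single a a 1 + (2 : ℂ) • single b b 1) = 0) :
    D (single a a 1) = 0 ∧ D (single b b 1) = 0 := by
  set y := single a a (1 : A) + (2 : ℂ) • single b b 1
  have hyy := hD.map_mul_eq_zero hy hy
  have hsq : y * y = single a a 1 + (4 : ℂ) • single b b 1 := by
    simp only [y, smul_single, mul_add, add_mul, single_mul_single_same, mul_one, ne_eq, hab,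
      hab.symm, not_false_eq_true, single_mul_single_of_ne, add_zero, zero_add,
      Algebra.mul_smul_comm, smul_smul, add_right_inj]
    norm_num
  have ha : single a a (1 : A) = (2 : ℂ) • y - y * y := by rw [hsq]; module
  have hb : single b b (1 : A) = (2⁻¹ : ℂ) • (y * y - y) := by rw [hsq]; module
  constructor
  · rw [ha, hD.map_sub, hD.map_smul, hy, hyy, smul_zero, sub_zero]
  · rw [hb, hD.map_smul, hD.map_sub, hy, hyy, sub_zero, smul_zero]

lemma apply_eq_zero_of_entry_eq_zero (hD : IsMatDerivation A M D) {a b : Fin n}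
    (ha : D (single a a 1) = 0) (hb : D (single b b 1) = 0)
    {z : Matrix (Fin n) (Fin n) A} (hz : z a b = 0) : D z a b = 0 := by
  have h : single a a 1 * (z * single b b 1) = 0 := by
    rw [← Matrix.mul_assoc, single_mul_mul_single, hz]; simp
  have h₁ : D (z * single b b 1) a b = D z a b := by
    simp [hD.map_mul_apply, hb, single_apply, apply_ite op]
  have h₂ : D (single a a 1 * (z * single b b 1)) a b = D (z * single b b 1) a b := by
    rw [hD.map_mul_apply]
    simp [ha, single_apply]
  rw [← h₁, ← h₂, h, hD.map_zero, Matrix.zero_apply]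

lemma map_cycle_cube_apply (hD : IsMatDerivation A M D) {k s t : Fin n} (hks : k ≠ s)
    (hkt : k ≠ t) (hst : s ≠ t) (v : A) :
    D ((single k s v + (single s t 1 + single t k 1)) *
        ((single k s v + (single s t 1 + single t k 1)) *
          (single k s v + (single s t 1 + single t k 1)))) k k =
      D (single k s v + (single s t 1 + single t k 1)) k s +
        v • (D (single k s v + (single s t 1 + single t k 1)) s t +
          D (single k s v + (single s t 1 + single t k 1)) t k) := by
  have hsq := hD.map_mul_apply (single k s v + (single s t 1 + single t k 1))
    (single k s v + (single s t 1 + single t k 1)) s k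
  rw [cycle_sq hks hkt hst] at hsq
  rw [hD.map_mul_apply, cycle_sq hks hkt hst]
  simp [hsq, hks, hks.symm, hkt.symm, hst.symm, single_apply, apply_ite op]

end IsMatDerivation

end Derivation

section TwoLocal

variable {A M : Type*} [NormedRing A] [NormedAlgebra ℂ A] [AddCommGroup M] [Module ℂ M]
  [Module A M] [Module Aᵐᵒᵖ M]
variable {Δ : Matrix (Fin n) (Fin n) A → Matrix (Fin n) (Fin n) M}

namespace Is2LocalMatDerivation

lemma apply_eq_of_eqOn_row_col (hΔ : Is2LocalMatDerivation A M Δ)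
    {z z' : Matrix (Fin n) (Fin n) A} {k s : Fin n} (hrow : ∀ j, z k j = z' k j)
    (hcol : ∀ i, z i s = z' i s) : Δ z k s = Δ z' k s := by
  obtain ⟨D, hD, hz, hz'⟩ := hΔ z z'
  have h := hD.apply_eq_zero_of_row_col (m := z - z') (k := k) (s := s) (by simp [hrow])
    (by simp [hcol])
  rwa [hD.map_sub, Matrix.sub_apply, ← hz, ← hz', sub_eq_zero] at h

lemma apply_sub_apply_eq (hΔ : Is2LocalMatDerivation A M Δ) (z m : Matrix (Fin n) (Fin n) A)
    {k s a b : Fin n} (hm : ∀ D, IsMatDerivation A M D → D m k s = D m a b) :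
    Δ z k s - Δ (z - m) k s = Δ z a b - Δ (z - m) a b := by
  obtain ⟨D, hD, hz, hzm⟩ := hΔ z (z - m)
  have h : D m = Δ z - Δ (z - m) := by rw [hz, hzm, ← hD.map_sub, sub_sub_cancel]
  simpa [h] using hm D hD

lemma apply_eq_zero_of_entry_eq_zero (hΔ : Is2LocalMatDerivation A M Δ)
    (hdiag : ∀ x ∈ diagSet A n, Δ x = 0) {a b : Fin n} (hab : a ≠ b)
    {z : Matrix (Fin n) (Fin n) A} (hz : z a b = 0) : Δ z a b = 0 := by
  obtain ⟨D, hD, hDz, hDy⟩ := hΔ z (single a a 1 + (2 : ℂ) • single b b 1)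
  have hy : D (single a a 1 + (2 : ℂ) • single b b 1) = 0 := by
    rw [← hDy]
    refine hdiag _ fun i j hij => ?_
    simp [single_self_apply_of_ne hij]
  obtain ⟨ha, hb⟩ := hD.map_single_one_eq_zero hab hy
  rw [hDz]
  exact hD.apply_eq_zero_of_entry_eq_zero ha hb hz

lemma apply_single_apply_self (hΔ : Is2LocalMatDerivation A M Δ)
    (hdiag : ∀ x ∈ diagSet A n, Δ x = 0) (hvan : ∀ y ∈ unitSpan A n, Δ y = 0)
    {k s t : Fin n} (hks : k ≠ s) (hkt : k ≠ t) (hst : s ≠ t) (v : A) :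
    Δ (single k s v) k s = 0 := by
  set u : Matrix (Fin n) (Fin n) A := single s t 1 + single t k 1
  have hu : Δ u = 0 := hvan _ <| Submodule.add_mem _
    (Submodule.subset_span ⟨(s, t), rfl⟩) (Submodule.subset_span ⟨(t, k), rfl⟩)
  have hg3 : Δ ((single k s v + u) * ((single k s v + u) * (single k s v + u))) = 0 := by
    refine hdiag _ fun i j hij => ?_
    simp [u, cycle_cube hks hkt hst, single_self_apply_of_ne hij]
  have hg_st_tk : Δ (single k s v + u) s t = 0 ∧ Δ (single k s v + u) t k = 0 := by
    obtain ⟨D, hD, hDg, hDu⟩ := hΔ (single k s v + u) u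
    rw [hDg, hD.map_add, ← hDu, hu, add_zero]
    exact ⟨hD.map_single_apply_of_ne hks.symm hst.symm v, hD.map_single_apply_of_ne hkt.symm hks v⟩
  have hg_ks : Δ (single k s v + u) k s = 0 := by
    obtain ⟨D, hD, hDg, hDg3⟩ := hΔ (single k s v + u)
      ((single k s v + u) * ((single k s v + u) * (single k s v + u)))
    have h := hD.map_cycle_cube_apply hks hkt hst v
    rw [← hDg3, hg3, ← hDg, hg_st_tk.1, hg_st_tk.2, add_zero, smul_zero, add_zero] at h
    exact h.symm
  obtain ⟨D, hD, hDv, hDg⟩ := hΔ (single k s v) (single k s v + u)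
  have hu_ks : D u k s = 0 := by
    have h := hD.map_cycle_cube_apply hks hkt hst 0
    rw [cycle_cube hks hkt hst] at h
    simpa [hD.map_zero] using h.symm
  rwa [show u = single k s v + u - single k s v by abel, hD.map_sub, ← hDv, ← hDg, Matrix.sub_apply,
    hg_ks, zero_sub, neg_eq_zero] at hu_ks

lemma apply_eq_zero_of_offDiagSupport_subset (hΔ : Is2LocalMatDerivation A M Δ)
    (hdiag : ∀ x ∈ diagSet A n, Δ x = 0) (hvan : ∀ y ∈ unitSpan A n, Δ y = 0)
    {k s t : Fin n} (hks : k ≠ s) (hkt : k ≠ t) (hst : s ≠ t) {z : Matrix (Fin n) (Fin n) A}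
    (hz : z.offDiagSupport ⊆ {(k, s)}) : Δ z k s = 0 := by
  have hz0 : ∀ i j, i ≠ j → (i, j) ≠ (k, s) → z i j = 0 := fun i j hij hne =>
    not_not.1 fun h => hne (hz ⟨hij, h⟩)
  set m₁ := single t k (z k k) + single k k (z k k)
  set m₂ := single s t (z s s) + single s s (z s s)
  have h₁ : Δ z k s = Δ (z - m₁) k s := by
    have h := hΔ.apply_sub_apply_eq z m₁
      fun D hD => hD.map_single_add_diag_apply_row hkt hks (z k k)
    rwa [hΔ.apply_eq_zero_of_entry_eq_zero hdiag hst.symm (hz0 t s hst.symm (by simp [hkt.symm])),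
      hΔ.apply_eq_zero_of_entry_eq_zero hdiag hst.symm
        (by simp [m₁, hz0 t s hst.symm, hks, hkt, hkt.symm]),
      sub_zero, eq_comm, sub_eq_zero] at h
  have h₂ : Δ (z - m₁) k s = Δ (z - m₁ - m₂) k s := by
    have h := hΔ.apply_sub_apply_eq (z - m₁) m₂
      fun D hD => hD.map_single_add_diag_apply_col hks.symm hst (z s s)
    have hzkt := hz0 k t hkt (by simp [hst.symm])
    rwa [hΔ.apply_eq_zero_of_entry_eq_zero hdiag hkt (by simp [m₁, hzkt, hkt, hkt.symm]),
      hΔ.apply_eq_zero_of_entry_eq_zero hdiag hkt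
        (by simp [m₁, m₂, hzkt, hkt, hst, hks.symm, hkt.symm]),
      sub_zero, eq_comm, sub_eq_zero] at h
  have h₃ : Δ (z - m₁ - m₂) k s = Δ (single k s (z k s)) k s := by
    apply hΔ.apply_eq_of_eqOn_row_col
    · intro j
      rcases eq_or_ne j k with rfl | hjk
      · simp [m₁, m₂, hks.symm, hkt.symm]
      rcases eq_or_ne j s with rfl | hjs
      · simp [m₁, m₂, hks, hks.symm, hkt.symm, hst.symm]
      simp [m₁, m₂, hz0 k j hjk.symm (by simp [hjs]), hks.symm, hkt.symm, hjk.symm, hjs.symm]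
    · intro i
      rcases eq_or_ne i s with rfl | his
      · simp [m₁, m₂, hks, hst.symm]
      rcases eq_or_ne i k with rfl | hik
      · simp [m₁, m₂, hks, hks.symm, hkt.symm, hst.symm]
      simp [m₁, m₂, hz0 i s his (by simp [hik]), hks, hst.symm, hik.symm, his.symm]
  rw [h₁, h₂, h₃, hΔ.apply_single_apply_self hdiag hvan hks hkt hst]

lemma apply_eq_zero_of_mem_offDiagSupport (hΔ : Is2LocalMatDerivation A M Δ)
    {z : Matrix (Fin n) (Fin n) A}
    (ih : ∀ z', z'.offDiagSupport ⊂ z.offDiagSupport → ∀ k s, k ≠ s → Δ z' k s = 0)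
    {i j k s : Fin n} (hp : (i, j) ∈ z.offDiagSupport) (hne : (i, j) ≠ (k, s)) (hks : k ≠ s) :
    Δ z k s = 0 := by
  have hij : i ≠ j := hp.1
  have hfar : ∀ a b, a ≠ b → a ≠ i → b ≠ j → Δ z a b = 0 := fun a b hab hai hbj => by
    rw [hΔ.apply_eq_of_eqOn_row_col (z' := z - single i j (z i j))
      (by simp [hai.symm]) (by simp [hbj.symm])]
    exact ih _ (offDiagSupport_sub_ssubset hp (by simp)
      fun a b _ hp => single_apply_eq_zero_of_ne hp _) a b hab
  obtain rfl | hik := eq_or_ne i k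
  · have hjs : j ≠ s := fun h => hne (by rw [h])
    set m := single i j (z i j) + single j j (z i j)
    have hm : (z - m).offDiagSupport ⊂ z.offDiagSupport :=
      offDiagSupport_sub_ssubset hp (by simp [m, single_self_apply_of_ne hij])
        fun a b hab hp => by simp [m, single_apply_eq_zero_of_ne hp, single_self_apply_of_ne hab]
    have h := hΔ.apply_sub_apply_eq z m
      fun D hD => hD.map_single_add_diag_apply_row hij.symm hjs (z i j)
    rwa [ih _ hm i s hks, ih _ hm j s hjs, hfar j s hjs hij.symm hjs.symm, sub_zero, sub_zero] at h
  obtain rfl | hjs := eq_or_ne j s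
  · set m := single i j (z i j) + single i i (z i j)
    have hm : (z - m).offDiagSupport ⊂ z.offDiagSupport :=
      offDiagSupport_sub_ssubset hp (by simp [m, single_self_apply_of_ne hij])
        fun a b hab hp => by simp [m, single_apply_eq_zero_of_ne hp, single_self_apply_of_ne hab]
    have h := hΔ.apply_sub_apply_eq z m
      fun D hD => hD.map_single_add_diag_apply_col hik hij (z i j)
    rwa [ih _ hm k j hks, ih _ hm k i hik.symm, hfar k i hik.symm hik.symm hij, sub_zero,
      sub_zero] at h
  exact hfar k s hks hik.symm hjs.symm

lemma apply_eq_zero_of_forall_ssubset (hΔ : Is2LocalMatDerivation A M Δ)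
    (hdiag : ∀ x ∈ diagSet A n, Δ x = 0) (hvan : ∀ y ∈ unitSpan A n, Δ y = 0) (hn : 2 < n)
    {z : Matrix (Fin n) (Fin n) A}
    (ih : ∀ z', z'.offDiagSupport ⊂ z.offDiagSupport → ∀ k s, k ≠ s → Δ z' k s = 0)
    {k s : Fin n} (hks : k ≠ s) : Δ z k s = 0 := by
  by_cases hz : z.offDiagSupport ⊆ {(k, s)}
  · obtain ⟨t, htk, hts⟩ := Fin.exists_ne_and_ne_of_two_lt k s hn
    exact hΔ.apply_eq_zero_of_offDiagSupport_subset hdiag hvan hks htk.symm hts.symm hz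
  obtain ⟨⟨i, j⟩, hp, hne⟩ := Set.not_subset.1 hz
  exact hΔ.apply_eq_zero_of_mem_offDiagSupport ih hp hne hks

end Is2LocalMatDerivation

end TwoLocal

/-- if a 2-local derivation `Δ : Mₙ(A) → Mₙ(M)` (`n ≥ 3`) vanishes on all
diagonal matrices and on the span of the matrix units, then all off-diagonal entries of
`Δ x` vanish: `(Δ x)_{ks} = 0` for `k ≠ s`. -/
theorem twoLocal_offdiagonal_entries_zero (n : ℕ) (hn : 3 ≤ n)
    (Δ : Matrix (Fin n) (Fin n) A → Matrix (Fin n) (Fin n) M)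
    (hΔ : Is2LocalMatDerivation A M Δ)
    (hdiag : ∀ x ∈ diagSet A n, Δ x = 0)
    (hvan : ∀ t ∈ unitSpan A n, Δ t = 0) :
    ∀ (x : Matrix (Fin n) (Fin n) A) (k s : Fin n), k ≠ s → Δ x k s = 0 := by
  intro x
  induction hN : x.offDiagSupport.ncard using Nat.strong_induction_on generalizing x with
  | _ N ih =>
    intro k s hks
    refine hΔ.apply_eq_zero_of_forall_ssubset hdiag hvan hn (fun z hz => ?_) hks
    exact ih _ (hN ▸ Set.ncard_lt_ncard hz) z rfl
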